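/- Let w be a nonempty string, c a character with π(c·w) = ∞, and let g be the number of prefix-pal-groups of w, i.e., the number of suffix-pal-groups of reverse(w). Let t be a string with |t| ≥ |w| + 1 such that ssp_w is a prefix of ssp_{t[2..|t|]}. Then ssp_{c·w} is a prefix of ssp_t if and only if π(t) = ∞ or π(t) > g. -/

import Mathlib

open scoped ENat

variable {α : Type*}

/-- `w` is a palindrome. -/
def IsPal (w : List α) : Prop := w.reverse = w

/-- The substring `w[i..j]`, 1-indexed, inclusive; empty if `i > j`. -/
def sub (w : List α) (i j : ℕ) : List α := (w.take j).drop (i - 1)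

/-- Two strings of the same length pal-match: they agree on which substrings
`w[i..j]` (for `1 ≤ i < j ≤ |w|`) are palindromes. -/
def PalMatch (x y : List α) : Prop :=
  x.length = y.length ∧
    ∀ i j, 1 ≤ i → i < j → j ≤ x.length → (IsPal (sub x i j) ↔ IsPal (sub y i j))

/-- `sspAt w i` : length of the shortest palindromic suffix of `w[1..i]`
of length at least 2, or `∞` if none exists. -/
noncomputable def sspAt (w : List α) (i : ℕ) : ℕ∞ :=
  sInf {ℓ : ℕ∞ | ∃ u : List α, u <:+ w.take i ∧ IsPal u ∧ 2 ≤ u.length ∧ (u.length : ℕ∞) = ℓ}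

/-- The ssp-encoding of `w` as a sequence of length `|w|` over `ℕ ∪ {∞}`. -/
noncomputable def ssp (w : List α) : List ℕ∞ :=
  (List.range w.length).map fun k => sspAt w (k + 1)

/-- The palindromic proper suffixes of `w` (including the empty suffix). -/
def palSufs (w : List α) : Set (List α) :=
  {u | u <:+ w ∧ IsPal u ∧ u.length < w.length}

/-- The suffix-pal-groups of `w`, identified with the character `w[|w|-|u|]`
immediately to the left of their members. -/
def palSufGroups (w : List α) : Set (Option α) :=
  {c | ∃ u ∈ palSufs w, w[w.length - u.length - 1]? = c}

/-- Length of the representative (shortest member) of the suffix-pal-group of `w`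
whose members have the character `c` immediately to their left. -/
noncomputable def repLen (w : List α) (c : Option α) : ℕ :=
  sInf {ℓ : ℕ | ∃ u ∈ palSufs w, w[w.length - u.length - 1]? = c ∧ u.length = ℓ}

/-- The 1-based identifier of the suffix-pal-group of `w` with left character `c`:
identifiers are assigned in increasing order of the representatives' lengths. -/
noncomputable def groupIdOf (w : List α) (c : Option α) : ℕ :=
  Set.ncard {c' | c' ∈ palSufGroups w ∧ repLen w c' ≤ repLen w c}

/-- `sspgAt w i` : `∞` if `sspAt w i = ∞`, and otherwise the identifier of the
suffix-pal-group of `w[1..i-1]` containing the palindromic suffix of `w[1..i-1]`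
of length `sspAt w i - 2`. -/
noncomputable def sspgAt (w : List α) (i : ℕ) : ℕ∞ :=
  if sspAt w i = ⊤ then ⊤
  else (groupIdOf (w.take (i - 1))
        ((w.take (i - 1))[(i - 1) - ((sspAt w i).toNat - 2) - 1]?) : ℕ∞)

/-- `π(w) = sspg_{reverse w}[|w|]`. -/
noncomputable def piEnc (w : List α) : ℕ∞ := sspgAt w.reverse w.length

/-!
`π(c·w) = ∞` says that `c·w` has no palindromic prefix of length at least 2, so
`ssp_{c·w}[i] = ssp_w[i-1]` for `i ≥ 2`, whereas `ssp_t[i]` differs from `ssp_{t[2..]}[i-1]`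
only when `t[1..i]` is a palindrome and `ssp_{t[2..]}[i-1] = ∞`. Hence `ssp_{c·w}` is a prefix
of `ssp_t` iff the shortest palindromic prefix of `t` of length at least 2 has length
`p > |w| + 1`; indeed `t[2..p]` has no palindromic suffix of length at least 2, since it would
mirror to a shorter palindromic prefix of `t`.

The sequence `ssp` determines which factors are palindromes, so `w` and `t[2..]` have the same
palindromic prefixes, and the same coincidences among the letters following them, up to length
`|w|`: exactly `g` suffix-pal-groups of `reverse t[2..]` have a representative shorter than
`|w|`. The palindromic prefix of `t[2..]` of length `p - 2` is the shortest member of its group,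
and `π(t)` is the rank of that group, so `π(t) > g` iff `p - 2 ≥ |w|`.
-/

lemma List.getElem?_congr_index (x : List α) {i i' : ℕ} (h : i = i') : x[i]? = x[i']? := by
  rw [h]

lemma isPal_iff_getElem? (u : List α) :
    IsPal u ↔ ∀ k, k < u.length → u[k]? = u[u.length - 1 - k]? := by
  constructor
  · intro h k hk
    conv_lhs => rw [← h]
    exact List.getElem?_reverse hk
  · intro h
    apply List.ext_getElem?
    intro n
    by_cases hn : n < u.length
    · rw [List.getElem?_reverse hn, (h _ hn).symm]
    · rw [List.getElem?_eq_none (by simpa using not_lt.mp hn),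
        List.getElem?_eq_none (by simpa using not_lt.mp hn)]

/-- `x[1..j]` has a palindromic suffix of length `ℓ`, phrased with 0-based indices so that all
index bookkeeping is linear arithmetic (`x[j - ℓ + k]` is the `k`-th letter of that suffix). -/
def HasPalSuffix (x : List α) (j ℓ : ℕ) : Prop :=
  ℓ ≤ j ∧ j ≤ x.length ∧ ∀ k, k < ℓ → x[j - ℓ + k]? = x[j - 1 - k]?

lemma hasPalSuffix_iff_exists {x : List α} {j ℓ : ℕ} (hj : j ≤ x.length) :
    HasPalSuffix x j ℓ ↔ ∃ u, u <:+ x.take j ∧ IsPal u ∧ u.length = ℓ := by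
  constructor
  · rintro ⟨hℓj, -, hpal⟩
    have hlen : ((x.take j).drop (j - ℓ)).length = ℓ := by simp; omega
    refine ⟨(x.take j).drop (j - ℓ), List.drop_suffix _ _, ?_, hlen⟩
    rw [isPal_iff_getElem?, hlen]
    intro k hk
    rw [List.getElem?_drop, List.getElem?_drop, List.getElem?_take_of_lt (by omega),
      List.getElem?_take_of_lt (by omega),
      x.getElem?_congr_index (by omega : j - ℓ + (ℓ - 1 - k) = j - 1 - k)]
    exact hpal k hk
  · rintro ⟨u, hsuf, hpal, rfl⟩
    have hle : u.length ≤ j := by simpa [hj] using hsuf.length_le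
    refine ⟨hle, hj, fun k hk => ?_⟩
    rw [List.suffix_iff_eq_drop] at hsuf
    have h := (isPal_iff_getElem? u).mp hpal k hk
    rw [hsuf, List.getElem?_drop, List.getElem?_drop, List.getElem?_take_of_lt (by simp; omega),
      List.getElem?_take_of_lt (by simp; omega)] at h
    simp only [List.length_take, min_eq_left hj] at h
    convert h using 2; simp; omega

lemma hasPalSuffix_iff_of_le_one {x : List α} {j ℓ : ℕ} (hℓ : ℓ ≤ 1) :
    HasPalSuffix x j ℓ ↔ ℓ ≤ j ∧ j ≤ x.length := by
  refine ⟨fun h => ⟨h.1, h.2.1⟩, fun ⟨h1, h2⟩ => ⟨h1, h2, fun k hk => ?_⟩⟩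
  exact x.getElem?_congr_index (by omega)

lemma hasPalSuffix_add_two_iff {x : List α} {j ℓ : ℕ} :
    HasPalSuffix x (j + 1) (ℓ + 2) ↔
      ℓ + 2 ≤ j + 1 ∧ j + 1 ≤ x.length ∧ HasPalSuffix x j ℓ ∧ x[j - 1 - ℓ]? = x[j]? := by
  constructor
  · rintro ⟨h1, h2, hp⟩
    refine ⟨h1, h2, ⟨by omega, by omega, fun k hk => ?_⟩, ?_⟩
    · convert hp (k + 1) (by omega) using 2 <;> omega
    · convert hp 0 (by omega) using 2 <;> omega
  · rintro ⟨h1, h2, ⟨-, -, hp⟩, hc⟩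
    refine ⟨h1, h2, fun k hk => ?_⟩
    rcases Nat.lt_or_ge 0 k with hk0 | hk0
    · rcases Nat.lt_or_ge k (ℓ + 1) with hkℓ | hkℓ
      · convert hp (k - 1) (by omega) using 2 <;> omega
      · convert hc.symm using 2 <;> omega
    · convert hc using 2 <;> omega

/-- `x[j-b+1..j-b+a]` is the mirror image of `x[j-a+1..j]` inside the palindrome `x[j-b+1..j]`. -/
lemma HasPalSuffix.mirror_iff {x : List α} {j a b : ℕ} (hb : HasPalSuffix x j b)
    (hab : a ≤ b) : HasPalSuffix x j a ↔ HasPalSuffix x (j - b + a) a := by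
  obtain ⟨hbj, hjx, hbp⟩ := hb
  constructor
  · rintro ⟨-, -, hap⟩
    refine ⟨by omega, by omega, fun k hk => ?_⟩
    calc x[j - b + a - a + k]?
        = x[j - b + k]? := x.getElem?_congr_index (by omega)
      _ = x[j - 1 - k]? := hbp k (by omega)
      _ = x[j - a + k]? := (hap k hk).symm
      _ = x[j - 1 - (a - 1 - k)]? := x.getElem?_congr_index (by omega)
      _ = x[j - b + (a - 1 - k)]? := (hbp (a - 1 - k) (by omega)).symm
      _ = x[j - b + a - 1 - k]? := x.getElem?_congr_index (by omega)
  · rintro ⟨-, -, hap⟩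
    refine ⟨by omega, hjx, fun k hk => ?_⟩
    calc x[j - a + k]?
        = x[j - 1 - (a - 1 - k)]? := x.getElem?_congr_index (by omega)
      _ = x[j - b + (a - 1 - k)]? := (hbp (a - 1 - k) (by omega)).symm
      _ = x[j - b + a - 1 - k]? := x.getElem?_congr_index (by omega)
      _ = x[j - b + a - a + k]? := (hap k hk).symm
      _ = x[j - b + k]? := x.getElem?_congr_index (by omega)
      _ = x[j - 1 - k]? := hbp k (by omega)

lemma HasPalSuffix.getElem?_eq_iff {x : List α} {j a b : ℕ} (hab : a < b) (hbj : b + 1 ≤ j)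
    (ha : HasPalSuffix x j a) (hb : HasPalSuffix x j b) :
    x[j - a - 1]? = x[j - b - 1]? ↔ HasPalSuffix x (j - b + a + 1) (a + 2) := by
  have hinner := (hb.mirror_iff hab.le).mp ha
  have hjx := hb.2.1
  have key : x[j - b + a]? = x[j - a - 1]? :=
    (hb.2.2 a hab).trans (x.getElem?_congr_index (by omega))
  rw [hasPalSuffix_add_two_iff]
  constructor
  · intro h
    refine ⟨by omega, by omega, hinner, ?_⟩
    calc x[j - b + a - 1 - a]?
        = x[j - b - 1]? := x.getElem?_congr_index (by omega)
      _ = x[j - b + a]? := h.symm.trans key.symm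
  · rintro ⟨-, -, -, h⟩
    calc x[j - a - 1]?
        = x[j - b + a - 1 - a]? := key.symm.trans h.symm
      _ = x[j - b - 1]? := x.getElem?_congr_index (by omega)

lemma getElem?_eq_iff_hasPalSuffix {x : List α} {i j : ℕ} (hij : i < j)
    (hj : j + 1 ≤ x.length) (hi : HasPalSuffix x i i) (hjj : HasPalSuffix x j j) :
    x[i]? = x[j]? ↔ HasPalSuffix x (j + 1) (i + 2) := by
  have hchar : x[j - 1 - i]? = x[i]? :=
    (hjj.2.2 i hij).symm.trans (x.getElem?_congr_index (by omega))
  have hji : HasPalSuffix x j i :=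
    (hjj.mirror_iff hij.le).mpr (by rwa [Nat.sub_self, zero_add])
  rw [hasPalSuffix_add_two_iff]
  exact ⟨fun h => ⟨by omega, hj, hji, hchar.trans h⟩, fun ⟨_, _, _, h⟩ => hchar.symm.trans h⟩

lemma hasPalSuffix_drop_one_iff {x : List α} {j ℓ : ℕ} (hℓ : ℓ + 1 ≤ j) (hj : j ≤ x.length) :
    HasPalSuffix x j ℓ ↔ HasPalSuffix (x.drop 1) (j - 1) ℓ := by
  unfold HasPalSuffix
  simp only [List.getElem?_drop, List.length_drop]
  refine ⟨fun ⟨_, _, hp⟩ => ⟨by omega, by omega, fun k hk => ?_⟩,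
    fun ⟨_, _, hp⟩ => ⟨by omega, hj, fun k hk => ?_⟩⟩
  · convert hp k hk using 2 <;> omega
  · convert hp k hk using 2 <;> omega

lemma hasPalSuffix_reverse_iff {x : List α} {m : ℕ} :
    HasPalSuffix x.reverse x.length m ↔ HasPalSuffix x m m := by
  unfold HasPalSuffix
  simp only [List.length_reverse, le_refl, true_and]
  refine ⟨fun ⟨hm, hp⟩ => ⟨hm, fun k hk => ?_⟩, fun ⟨hm, hp⟩ => ⟨hm, fun k hk => ?_⟩⟩
  · have h := hp (m - 1 - k) (by omega)
    rw [List.getElem?_reverse (by omega), List.getElem?_reverse (by omega)] at h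
    convert h using 2 <;> omega
  · rw [List.getElem?_reverse (by omega), List.getElem?_reverse (by omega)]
    convert (hp (m - 1 - k) (by omega)) using 2 <;> omega

lemma sspAt_eq_sInf {x : List α} {j : ℕ} (hj : j ≤ x.length) :
    sspAt x j = sInf ((↑) '' {m : ℕ | 2 ≤ m ∧ HasPalSuffix x j m}) := by
  rw [sspAt]
  congr 1
  ext ℓ
  simp only [Set.mem_ofPred_eq, Set.mem_image, hasPalSuffix_iff_exists hj]
  constructor
  · rintro ⟨u, hsuf, hpal, h2, rfl⟩
    exact ⟨u.length, ⟨h2, u, hsuf, hpal, rfl⟩, rfl⟩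
  · rintro ⟨_, ⟨h2, u, hsuf, hpal, rfl⟩, rfl⟩
    exact ⟨u, hsuf, hpal, h2, rfl⟩

lemma sspAt_eq_top_iff {x : List α} {j : ℕ} (hj : j ≤ x.length) :
    sspAt x j = ⊤ ↔ ∀ m, 2 ≤ m → ¬HasPalSuffix x j m := by
  simp only [sspAt_eq_sInf hj, sInf_eq_top, Set.forall_mem_image, Set.mem_ofPred_eq,
    ENat.natCast_ne_top, imp_false, not_and]

lemma sspAt_le {x : List α} {j m : ℕ} (h2 : 2 ≤ m) (h : HasPalSuffix x j m) :
    sspAt x j ≤ m := by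
  rw [sspAt_eq_sInf h.2.1]
  exact sInf_le ⟨m, ⟨h2, h⟩, rfl⟩

lemma sspAt_eq_coe_iff {x : List α} {j m : ℕ} (hj : j ≤ x.length) :
    sspAt x j = m ↔
      2 ≤ m ∧ HasPalSuffix x j m ∧ ∀ m', 2 ≤ m' → HasPalSuffix x j m' → m ≤ m' := by
  have hfwd : ∀ m : ℕ, sspAt x j = m →
      2 ≤ m ∧ HasPalSuffix x j m ∧ ∀ m', 2 ≤ m' → HasPalSuffix x j m' → m ≤ m' := by
    intro m hm
    have hne : ((↑) '' {m : ℕ | 2 ≤ m ∧ HasPalSuffix x j m} : Set ℕ∞).Nonempty := by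
      by_contra hemp
      rw [Set.not_nonempty_iff_eq_empty] at hemp
      rw [sspAt_eq_sInf hj, hemp, sInf_empty] at hm
      exact ENat.top_ne_natCast m hm
    obtain ⟨m₀, ⟨h2, hps⟩, hm₀⟩ := csInf_mem hne
    rw [← sspAt_eq_sInf hj, hm, Nat.cast_inj] at hm₀
    subst hm₀
    exact ⟨h2, hps, fun m' h2' hps' => by exact_mod_cast hm ▸ sspAt_le h2' hps'⟩
  refine ⟨hfwd m, fun ⟨h2, hps, hmin⟩ => ?_⟩
  obtain ⟨m₀, hm₀⟩ := ENat.ne_top_iff_exists.mp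
    (ne_top_of_le_ne_top (ENat.natCast_ne_top m) (sspAt_le h2 hps))
  obtain ⟨h2₀, hps₀, hmin₀⟩ := hfwd m₀ hm₀.symm
  rw [← hm₀, le_antisymm (hmin₀ m h2 hps) (hmin m₀ h2₀ hps₀)]

lemma sspAt_one {x : List α} (hx : 1 ≤ x.length) : sspAt x 1 = ⊤ :=
  (sspAt_eq_top_iff hx).mpr fun _ h2 h => by have := h.1; omega

lemma sspAt_reverse_length_eq_top_iff {x : List α} :
    sspAt x.reverse x.length = ⊤ ↔ ∀ m, 2 ≤ m → ¬HasPalSuffix x m m := by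
  simp only [sspAt_eq_top_iff (by simp : x.length ≤ x.reverse.length), hasPalSuffix_reverse_iff]

lemma sspAt_reverse_length_eq_coe_iff {x : List α} {p : ℕ} :
    sspAt x.reverse x.length = p ↔
      2 ≤ p ∧ HasPalSuffix x p p ∧ ∀ m, 2 ≤ m → HasPalSuffix x m m → p ≤ m := by
  simp only [sspAt_eq_coe_iff (by simp : x.length ≤ x.reverse.length), hasPalSuffix_reverse_iff]

/-- A suffix of `x[1..j]` of length `ℓ > m` is a palindrome iff its inner part `x[j-ℓ+2..j-1]` is
one and `x[j-ℓ+1] = x[j] = x[j-m+1]`; mirroring the shortest palindromic suffix inside the inner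
part turns this letter condition into: `x[j-ℓ+1..j-ℓ+m]` is a palindrome. So the palindromic
suffixes at `j` are determined by `ssp_x[j]` and by those at earlier positions. -/
lemma hasPalSuffix_iff_of_sspAt_eq_coe {x : List α} {j ℓ m : ℕ} (hj : j ≤ x.length)
    (hm : sspAt x j = m) (h2 : 2 ≤ ℓ) (hℓ : ℓ ≤ j) :
    HasPalSuffix x j ℓ ↔
      ℓ = m ∨ (m < ℓ ∧ HasPalSuffix x (j - 1) (ℓ - 2) ∧ HasPalSuffix x (j - ℓ + m) m) := by
  obtain ⟨hm2, hmps, hmin⟩ := (sspAt_eq_coe_iff hj).mp hm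
  obtain ⟨ℓ, rfl⟩ : ∃ ℓ', ℓ = ℓ' + 2 := ⟨ℓ - 2, by omega⟩
  obtain ⟨m, rfl⟩ : ∃ m', m = m' + 2 := ⟨m - 2, by omega⟩
  obtain ⟨j, rfl⟩ : ∃ j', j = j' + 1 := ⟨j - 1, by omega⟩
  obtain ⟨-, -, hmin', hmc⟩ := hasPalSuffix_add_two_iff.mp hmps
  simp only [Nat.add_sub_cancel]
  constructor
  · intro h
    obtain ⟨-, -, hin, hc⟩ := hasPalSuffix_add_two_iff.mp h
    rcases eq_or_ne ℓ m with rfl | hne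
    · exact Or.inl rfl
    have hlt : m < ℓ := by have := hmin _ h2 h; omega
    refine Or.inr ⟨by omega, hin, ?_⟩
    have hc' := (HasPalSuffix.getElem?_eq_iff hlt (by omega) hmin' hin).mp
      ((x.getElem?_congr_index (by omega)).trans (hmc.trans hc.symm) |>.trans
        (x.getElem?_congr_index (by omega)))
    convert hc' using 1; omega
  · rintro (h | ⟨hlt, hin, hrec⟩)
    · rw [h]; exact hmps
    have hc := (HasPalSuffix.getElem?_eq_iff (by omega) (by omega) hmin' hin).mpr
      (by convert hrec using 1; omega)
    refine hasPalSuffix_add_two_iff.mpr ⟨by omega, by omega, hin, ?_⟩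
    calc x[j - 1 - ℓ]? = x[j - m - 1]? :=
          (x.getElem?_congr_index (by omega)).trans hc.symm
      _ = x[j]? := (x.getElem?_congr_index (by omega)).trans hmc

@[simp]
lemma length_ssp (x : List α) : (ssp x).length = x.length := by
  simp [ssp]

lemma ssp_prefix_iff {x z : List α} (h : x.length ≤ z.length) :
    ssp x <+: ssp z ↔ ∀ i, 1 ≤ i → i ≤ x.length → sspAt x i = sspAt z i := by
  simp only [List.prefix_iff_getElem, ssp, List.length_map, List.length_range, h, exists_true_left,
    List.getElem_map, List.getElem_range]
  refine ⟨fun H i h1 hi => ?_, fun H i hi => H _ (by omega) (by omega)⟩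
  simpa [Nat.sub_add_cancel h1] using H (i - 1) (by omega)

lemma hasPalSuffix_iff_of_ssp_prefix {x y : List α} (hpre : ssp x <+: ssp y) :
    ∀ j ℓ, j ≤ x.length → (HasPalSuffix x j ℓ ↔ HasPalSuffix y j ℓ) := by
  have hxy : x.length ≤ y.length := by simpa only [length_ssp] using hpre.length_le
  have hssp := (ssp_prefix_iff hxy).mp hpre
  intro j
  induction j using Nat.strong_induction_on with
  | _ j IH =>
    intro ℓ hj
    rcases Nat.lt_or_ge ℓ 2 with hℓ | h2
    · rw [hasPalSuffix_iff_of_le_one (by omega), hasPalSuffix_iff_of_le_one (by omega)]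
      omega
    rcases Nat.lt_or_ge j ℓ with hℓj | hℓj
    · exact iff_of_false (fun h => by have := h.1; omega) (fun h => by have := h.1; omega)
    have heq := hssp j (by omega) hj
    rcases eq_or_ne (sspAt x j) ⊤ with htop | hne
    · exact iff_of_false ((sspAt_eq_top_iff hj).mp htop ℓ h2)
        ((sspAt_eq_top_iff (by omega)).mp (heq ▸ htop) ℓ h2)
    obtain ⟨m, hm⟩ := ENat.ne_top_iff_exists.mp hne
    rw [hasPalSuffix_iff_of_sspAt_eq_coe hj hm.symm h2 hℓj,
      hasPalSuffix_iff_of_sspAt_eq_coe (by omega) (heq ▸ hm.symm) h2 hℓj]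
    exact or_congr Iff.rfl (and_congr_right fun hmℓ =>
      and_congr (IH _ (by omega) _ (by omega)) (IH _ (by omega) _ (by omega)))

/-- Palindromic suffixes of `x[1..i]` shorter than `i` are those of `x[2..i]`. -/
lemma sspAt_eq_sspAt_drop_one_iff {x : List α} {i : ℕ} (h2 : 2 ≤ i) (hi : i ≤ x.length) :
    sspAt x i = sspAt (x.drop 1) (i - 1) ↔
      ¬(HasPalSuffix x i i ∧ sspAt (x.drop 1) (i - 1) = ⊤) := by
  have hiy : i - 1 ≤ (x.drop 1).length := by simp; omega
  have hdrop : ∀ m, m < i → (HasPalSuffix x i m ↔ HasPalSuffix (x.drop 1) (i - 1) m) :=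
    fun m hm => hasPalSuffix_drop_one_iff (by omega) hi
  rcases eq_or_ne (sspAt (x.drop 1) (i - 1)) ⊤ with htop | hne
  · have hnone := (sspAt_eq_top_iff hiy).mp htop
    simp only [htop, and_true, sspAt_eq_top_iff hi]
    refine ⟨fun h hpal => h i h2 hpal, fun hnpal m hm2 hpal => ?_⟩
    rcases Nat.lt_or_ge m i with hmi | hmi
    · exact hnone m hm2 ((hdrop m hmi).mp hpal)
    · exact hnpal (by convert hpal; have := hpal.1; omega)
  · obtain ⟨m, hm⟩ := ENat.ne_top_iff_exists.mp hne
    obtain ⟨hm2, hmps, hmin⟩ := (sspAt_eq_coe_iff hiy).mp hm.symm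
    have hmi : m < i := by have := hmps.1; omega
    refine iff_of_true ?_ fun h => hne h.2
    rw [← hm, sspAt_eq_coe_iff hi]
    refine ⟨hm2, (hdrop m hmi).mpr hmps, fun m' h2' hps' => ?_⟩
    rcases Nat.lt_or_ge m' i with hm'i | hm'i
    · exact hmin m' h2' ((hdrop m' hm'i).mp hps')
    · omega

/-- A palindromic suffix of `x[2..p]` would mirror to a palindromic prefix of `x` shorter than
the shortest one. -/
lemma sspAt_drop_one_eq_top {x : List α} {p : ℕ} (hp : sspAt x.reverse x.length = p) :
    sspAt (x.drop 1) (p - 1) = ⊤ := by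
  obtain ⟨hp2, hpal, hmin⟩ := sspAt_reverse_length_eq_coe_iff.mp hp
  have hpx := hpal.2.1
  refine (sspAt_eq_top_iff (by simp; omega)).mpr fun m hm2 hps => ?_
  have hmp : m + 1 ≤ p := by have := hps.1; omega
  have hxm := (hasPalSuffix_drop_one_iff hmp hpx).mpr hps
  have hprefix := (hpal.mirror_iff (by omega)).mp hxm
  rw [Nat.sub_self, zero_add] at hprefix
  have := hmin m hm2 hprefix
  omega

lemma ssp_cons_prefix_iff {c : α} {w t : List α} (hk : ∀ m, 2 ≤ m → ¬HasPalSuffix (c :: w) m m)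
    (ht : w.length + 1 ≤ t.length) (hpre : ssp w <+: ssp (t.drop 1)) :
    ssp (c :: w) <+: ssp t ↔ ∀ m, 2 ≤ m → HasPalSuffix t m m → w.length + 2 ≤ m := by
  have hwt : ∀ j, 1 ≤ j → j ≤ w.length → sspAt w j = sspAt (t.drop 1) j :=
    (ssp_prefix_iff (by simp; omega)).mp hpre
  have hcw : ∀ i, 2 ≤ i → i ≤ w.length + 1 → sspAt (c :: w) i = sspAt w (i - 1) :=
    fun i h2 hi => (sspAt_eq_sspAt_drop_one_iff h2 (by simpa using hi)).mpr fun h => hk i h2 h.1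
  have ht_iff : ∀ i, 2 ≤ i → i ≤ w.length + 1 →
      (sspAt t i = sspAt w (i - 1) ↔ ¬(HasPalSuffix t i i ∧ sspAt w (i - 1) = ⊤)) := by
    intro i h2 hi
    rw [hwt (i - 1) (by omega) (by omega)]
    exact sspAt_eq_sspAt_drop_one_iff h2 (by omega)
  rw [ssp_prefix_iff (by simp; omega), List.length_cons]
  constructor
  · intro h m hm2 hpal
    by_contra! hm
    obtain ⟨p, hp⟩ := ENat.ne_top_iff_exists.mp
      (mt sspAt_reverse_length_eq_top_iff.mp (not_forall.mpr ⟨m, by simpa [hm2] using hpal⟩))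
    obtain ⟨hp2, hppal, hpmin⟩ := sspAt_reverse_length_eq_coe_iff.mp hp.symm
    have hpm := hpmin m hm2 hpal
    have htop : sspAt w (p - 1) = ⊤ :=
      (hwt (p - 1) (by omega) (by omega)).trans (sspAt_drop_one_eq_top hp.symm)
    have hcwt : sspAt t p = sspAt w (p - 1) :=
      (h p (by omega) (by omega)).symm.trans (hcw p hp2 (by omega))
    exact (ht_iff p hp2 (by omega)).mp hcwt ⟨hppal, htop⟩
  · intro h i h1 hi
    rcases Nat.lt_or_ge i 2 with hi2 | hi2
    · obtain rfl : i = 1 := by omega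
      rw [sspAt_one (by simp), sspAt_one (by omega)]
    rw [hcw i hi2 hi, eq_comm, ht_iff i hi2 hi]
    exact fun ⟨hpal, _⟩ => absurd (h i hi2 hpal) (by omega)

lemma piEnc_eq_top_iff {x : List α} : piEnc x = ⊤ ↔ sspAt x.reverse x.length = ⊤ := by
  rw [piEnc, sspgAt]
  split_ifs with h <;> simp [h]

lemma getElem?_reverse_sub_one (z : List α) {ℓ : ℕ} (hℓ : ℓ < z.length) :
    z.reverse[z.length - ℓ - 1]? = z[ℓ]? := by
  rw [List.getElem?_reverse (by omega)]
  exact z.getElem?_congr_index (by omega)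

lemma piEnc_eq_groupIdOf {x : List α} {p : ℕ} (hp : sspAt x.reverse x.length = p) :
    piEnc x = groupIdOf (x.drop 1).reverse ((x.drop 1)[p - 2]?) := by
  obtain ⟨hp2, ⟨-, hpx, -⟩, -⟩ := sspAt_reverse_length_eq_coe_iff.mp hp
  have hrev : x.reverse.take (x.length - 1) = (x.drop 1).reverse := by rw [List.reverse_drop]
  have hidx : (x.drop 1).reverse[x.length - 1 - (p - 2) - 1]? = (x.drop 1)[p - 2]? := by
    simpa using getElem?_reverse_sub_one (x.drop 1) (ℓ := p - 2) (by simp; omega)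
  rw [piEnc, sspgAt, if_neg (hp ▸ ENat.natCast_ne_top p), hp, ENat.toNat_natCast, hrev, hidx]

lemma exists_mem_palSufs_reverse_iff {z : List α} {Q : ℕ → Prop} :
    (∃ u ∈ palSufs z.reverse, Q u.length) ↔ ∃ ℓ, ℓ < z.length ∧ HasPalSuffix z ℓ ℓ ∧ Q ℓ := by
  simp only [← hasPalSuffix_reverse_iff,
    hasPalSuffix_iff_exists (by simp : z.length ≤ z.reverse.length),
    List.take_of_length_le (by simp : z.reverse.length ≤ z.length)]
  constructor
  · rintro ⟨u, ⟨hsuf, hpal, hlt⟩, hQ⟩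
    exact ⟨u.length, by simpa using hlt, ⟨u, hsuf, hpal, rfl⟩, hQ⟩
  · rintro ⟨_, hlt, ⟨u, hsuf, hpal, rfl⟩, hQ⟩
    exact ⟨u, ⟨hsuf, hpal, by simpa using hlt⟩, hQ⟩

lemma mem_palSufGroups_reverse {z : List α} {d : Option α} :
    d ∈ palSufGroups z.reverse ↔ ∃ ℓ, ℓ < z.length ∧ HasPalSuffix z ℓ ℓ ∧ z[ℓ]? = d := by
  rw [palSufGroups, Set.mem_ofPred_eq, exists_mem_palSufs_reverse_iff (Q := fun ℓ =>
    z.reverse[z.reverse.length - ℓ - 1]? = d)]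
  simp only [List.length_reverse]
  exact exists_congr fun ℓ => and_congr_right fun hℓ => by rw [getElem?_reverse_sub_one z hℓ]

lemma repLen_reverse (z : List α) (d : Option α) :
    repLen z.reverse d = sInf {ℓ | ℓ < z.length ∧ HasPalSuffix z ℓ ℓ ∧ z[ℓ]? = d} := by
  rw [repLen]
  congr 1
  ext ℓ
  rw [Set.mem_ofPred_eq, exists_mem_palSufs_reverse_iff (Q := fun ℓ' =>
    z.reverse[z.reverse.length - ℓ' - 1]? = d ∧ ℓ' = ℓ)]
  simp only [List.length_reverse]
  constructor
  · rintro ⟨_, hℓ, hps, hd, rfl⟩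
    exact ⟨hℓ, hps, (getElem?_reverse_sub_one z hℓ).symm.trans hd⟩
  · rintro ⟨hℓ, hps, hd⟩
    exact ⟨ℓ, hℓ, hps, (getElem?_reverse_sub_one z hℓ).trans hd, rfl⟩

lemma repLen_reverse_spec {z : List α} {d : Option α} (hd : d ∈ palSufGroups z.reverse) :
    repLen z.reverse d < z.length ∧ HasPalSuffix z (repLen z.reverse d) (repLen z.reverse d) ∧
      z[repLen z.reverse d]? = d := by
  rw [repLen_reverse]
  exact Nat.sInf_mem (mem_palSufGroups_reverse.mp hd)

lemma repLen_reverse_getElem?_le {z : List α} {ℓ : ℕ} (hℓ : ℓ < z.length)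
    (h : HasPalSuffix z ℓ ℓ) : repLen z.reverse z[ℓ]? ≤ ℓ := by
  rw [repLen_reverse]
  exact Nat.sInf_le ⟨hℓ, h, rfl⟩

lemma getElem?_mem_palSufGroups_reverse {z : List α} {ℓ : ℕ} (hℓ : ℓ < z.length)
    (h : HasPalSuffix z ℓ ℓ) : z[ℓ]? ∈ palSufGroups z.reverse :=
  mem_palSufGroups_reverse.mpr ⟨ℓ, hℓ, h, rfl⟩

def palSufGroupsUpTo (x : List α) (k : ℕ) : Set (Option α) :=
  {c | c ∈ palSufGroups x ∧ repLen x c ≤ k}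

lemma palSufGroups_finite (x : List α) : (palSufGroups x).Finite := by
  refine ((Set.finite_Iio x.length).image (x[·]?)).subset ?_
  rintro _ ⟨u, ⟨-, -, hlt⟩, rfl⟩
  exact ⟨_, by simp only [Set.mem_Iio]; omega, rfl⟩

lemma ncard_palSufGroupsUpTo_lt_groupIdOf_iff {x : List α} {c : Option α} {k : ℕ}
    (hc : c ∈ palSufGroups x) :
    (palSufGroupsUpTo x k).ncard < groupIdOf x c ↔ k < repLen x c := by
  have hfin : ∀ k, (palSufGroupsUpTo x k).Finite :=
    fun _ => (palSufGroups_finite x).subset fun _ h => h.1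
  have hmono : ∀ {k k'}, k ≤ k' → palSufGroupsUpTo x k ⊆ palSufGroupsUpTo x k' :=
    fun hk _ ⟨hd, hle⟩ => ⟨hd, hle.trans hk⟩
  change _ < (palSufGroupsUpTo x (repLen x c)).ncard ↔ _
  constructor
  · intro hlt
    by_contra! hle
    exact (Set.ncard_le_ncard (hmono hle) (hfin k)).not_gt hlt
  · intro hlt
    refine Set.ncard_lt_ncard ((Set.ssubset_iff_of_subset (hmono hlt.le)).mpr ?_) (hfin _)
    exact ⟨c, ⟨hc, le_rfl⟩, fun h => by have := h.2; omega⟩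

lemma getElem?_eq_iff_of_hasPalSuffix_iff {w y : List α} (hwy : w.length ≤ y.length)
    (hps : ∀ j ℓ, j ≤ w.length → (HasPalSuffix w j ℓ ↔ HasPalSuffix y j ℓ))
    {i j : ℕ} (hij : i ≤ j) (hj : j < w.length) (hi : HasPalSuffix w i i)
    (hjj : HasPalSuffix w j j) :
    w[i]? = w[j]? ↔ y[i]? = y[j]? := by
  rcases hij.eq_or_lt with rfl | hlt
  · simp
  rw [getElem?_eq_iff_hasPalSuffix hlt (by omega) hi hjj,
    getElem?_eq_iff_hasPalSuffix hlt (by omega) ((hps i i (by omega)).mp hi)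
      ((hps j j hj.le).mp hjj)]
  exact hps _ _ (by omega)

/-- A group of `w.reverse` with representative of length `r` corresponds to the group of
`y.reverse` containing the palindromic prefix `y[1..r]`, which has the same representative. -/
lemma ncard_palSufGroups_reverse_eq {w y : List α} (hw : w ≠ []) (hwy : w.length ≤ y.length)
    (hps : ∀ j ℓ, j ≤ w.length → (HasPalSuffix w j ℓ ↔ HasPalSuffix y j ℓ)) :
    (palSufGroups w.reverse).ncard = (palSufGroupsUpTo y.reverse (w.length - 1)).ncard := by
  have hn : 0 < w.length := List.length_pos_iff.mpr hw
  refine Set.ncard_congr (fun d _ => y[repLen w.reverse d]?) ?_ ?_ ?_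
  · intro d hd
    obtain ⟨hlt, hpal, -⟩ := repLen_reverse_spec hd
    have hy := (hps _ _ hlt.le).mp hpal
    exact ⟨getElem?_mem_palSufGroups_reverse (by omega) hy,
      (repLen_reverse_getElem?_le (by omega) hy).trans (by omega)⟩
  · intro d₁ d₂ hd₁ hd₂ heq
    obtain ⟨hlt₁, hpal₁, hget₁⟩ := repLen_reverse_spec hd₁
    obtain ⟨hlt₂, hpal₂, hget₂⟩ := repLen_reverse_spec hd₂
    rw [← hget₁, ← hget₂]
    rcases le_total (repLen w.reverse d₁) (repLen w.reverse d₂) with hle | hle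
    · exact (getElem?_eq_iff_of_hasPalSuffix_iff hwy hps hle hlt₂ hpal₁ hpal₂).mpr heq
    · exact ((getElem?_eq_iff_of_hasPalSuffix_iff hwy hps hle hlt₁ hpal₂ hpal₁).mpr heq.symm).symm
  · rintro d' ⟨hd', hle⟩
    obtain ⟨-, hpal', hget'⟩ := repLen_reverse_spec hd'
    have hw' := (hps _ _ (by omega)).mpr hpal'
    have hd := getElem?_mem_palSufGroups_reverse (by omega) hw'
    obtain ⟨-, hpal, hget⟩ := repLen_reverse_spec hd
    refine ⟨_, hd, Eq.trans ?_ hget'⟩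
    exact (getElem?_eq_iff_of_hasPalSuffix_iff hwy hps (repLen_reverse_getElem?_le (by omega) hw')
      (by omega) hpal hw').mp hget

lemma hasPalSuffix_drop_one_sub_two {x : List α} {p : ℕ} (hp : sspAt x.reverse x.length = p) :
    HasPalSuffix (x.drop 1) (p - 2) (p - 2) := by
  obtain ⟨hp2, hpal, -⟩ := sspAt_reverse_length_eq_coe_iff.mp hp
  obtain ⟨q, rfl⟩ : ∃ q, p = q + 2 := ⟨p - 2, by omega⟩
  obtain ⟨-, hx, hin, -⟩ := hasPalSuffix_add_two_iff.mp hpal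
  simpa using (hasPalSuffix_drop_one_iff (j := q + 1) le_rfl (by omega)).mp hin

lemma getElem?_drop_one_mem_palSufGroups {x : List α} {p : ℕ}
    (hp : sspAt x.reverse x.length = p) :
    (x.drop 1)[p - 2]? ∈ palSufGroups (x.drop 1).reverse := by
  obtain ⟨hp2, ⟨-, hpx, -⟩, -⟩ := sspAt_reverse_length_eq_coe_iff.mp hp
  exact getElem?_mem_palSufGroups_reverse (by simp; omega) (hasPalSuffix_drop_one_sub_two hp)

/-- The palindromic prefix of `x[2..]` of length `p - 2` represents its group: a shorter member
`x[2..r+1]`, followed by the same letter `x[p] = x[1]`, would make `x[1..r+2]` a palindromic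
prefix shorter than `p`. -/
lemma repLen_getElem?_drop_one {x : List α} {p : ℕ} (hp : sspAt x.reverse x.length = p) :
    repLen (x.drop 1).reverse ((x.drop 1)[p - 2]?) = p - 2 := by
  obtain ⟨hp2, hpal, hmin⟩ := sspAt_reverse_length_eq_coe_iff.mp hp
  have hpx := hpal.2.1
  refine le_antisymm (repLen_reverse_getElem?_le (by simp; omega)
    (hasPalSuffix_drop_one_sub_two hp)) (not_lt.mp fun hlt => ?_)
  obtain ⟨hr, hrpal, hrget⟩ := repLen_reverse_spec (getElem?_drop_one_mem_palSufGroups hp)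
  set r := repLen (x.drop 1).reverse ((x.drop 1)[p - 2]?)
  have hxr : HasPalSuffix x (r + 1) r :=
    (hasPalSuffix_drop_one_iff le_rfl (by simp at hr; omega)).mpr (by simpa using hrpal)
  have hchar : x[r + 1 - 1 - r]? = x[r + 1]? :=
    calc x[r + 1 - 1 - r]? = x[p - p + 0]? := x.getElem?_congr_index (by omega)
      _ = x[p - 1 - 0]? := hpal.2.2 0 (by omega)
      _ = x[1 + (p - 2)]? := x.getElem?_congr_index (by omega)
      _ = x[1 + r]? := by simp only [← List.getElem?_drop]; exact hrget.symm
      _ = x[r + 1]? := x.getElem?_congr_index (by omega)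
  have := hmin (r + 2) (by omega) (hasPalSuffix_add_two_iff.mpr ⟨by omega, by omega, hxr, hchar⟩)
  omega

/-- Backward search step, case `π(c·w) = ∞`: with `g` the number of prefix-pal-groups
of `w` (i.e. suffix-pal-groups of `reverse w`), for `t` with `|t| ≥ |w| + 1` such that
`ssp w` is a prefix of `ssp t[2..]`, `ssp (c·w)` is a prefix of `ssp t` iff
`π(t) = ∞` or `π(t) > g`. -/
theorem stmt16 {α : Type*} (w : List α) (hw : w ≠ []) (c : α)
    (hk : piEnc (c :: w) = ⊤)
    (g : ℕ) (hg : g = (palSufGroups w.reverse).ncard)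
    (t : List α) (ht : w.length + 1 ≤ t.length)
    (hpre : ssp w <+: ssp (t.drop 1)) :
    (ssp (c :: w) <+: ssp t ↔ piEnc t = ⊤ ∨ (g : ℕ∞) < piEnc t) := by
  rw [piEnc_eq_top_iff, sspAt_reverse_length_eq_top_iff] at hk
  rw [ssp_cons_prefix_iff hk ht hpre, piEnc_eq_top_iff]
  rcases eq_or_ne (sspAt t.reverse t.length) ⊤ with htop | hne
  · exact iff_of_true (fun m hm hpal => absurd hpal (sspAt_reverse_length_eq_top_iff.mp htop m hm))
      (Or.inl htop)
  obtain ⟨p, hp⟩ := ENat.ne_top_iff_exists.mp hne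
  obtain ⟨hp2, hpal, hmin⟩ := sspAt_reverse_length_eq_coe_iff.mp hp.symm
  have hwy : w.length ≤ (t.drop 1).length := by simp; omega
  have hw1 : 1 ≤ w.length := List.length_pos_iff.mpr hw
  rw [piEnc_eq_groupIdOf hp.symm, hg,
    ncard_palSufGroups_reverse_eq hw hwy (hasPalSuffix_iff_of_ssp_prefix hpre), Nat.cast_lt,
    ncard_palSufGroupsUpTo_lt_groupIdOf_iff (getElem?_drop_one_mem_palSufGroups hp.symm),
    repLen_getElem?_drop_one hp.symm]
  simp only [hne, false_or]
  exact ⟨fun h => by have := h p hp2 hpal; omega,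
    fun h m hm hpal' => by have := hmin m hm hpal'; omega⟩
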